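/- For any partition (λ_1,…,λ_n) of nonnegative integers, s_{(2λ_1+1,λ_1+λ_2+1,…,λ_1+λ_n+1,λ_1-λ_n,…,λ_1-λ_1)}(x_1,…,x_n,x_1^{-1},…,x_n^{-1}) = sp_{(λ_1,…,λ_n)}(x_1,…,x_n) · oe_{(λ_1+1,…,λ_n+1)}(x_1,…,x_n). -/

import Mathlib

noncomputable section

/-- The field ℚ(x_1,…,x_n) of rational functions. -/
abbrev K (n : ℕ) : Type := FractionRing (MvPolynomial (Fin n) ℚ)

/-- The variable x_i. -/
def X {n : ℕ} (i : Fin n) : K n :=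
  algebraMap (MvPolynomial (Fin n) ℚ) (K n) (MvPolynomial.X i)

/-- ∏_{i<j} (z_i + z_i⁻¹ - z_j - z_j⁻¹). -/
def xpairs {F : Type*} [Field F] {m : ℕ} (z : Fin m → F) : F :=
  ∏ i : Fin m, ∏ j : Fin m, if i < j then z i + (z i)⁻¹ - z j - (z j)⁻¹ else 1

/-- Bialternant Schur polynomial s_μ(z) = det(z_i^{μ_j+m-j}) / ∏_{i<j}(z_i - z_j). -/
def schur {F : Type*} [Field F] (m : ℕ) (μ : Fin m → ℤ) (z : Fin m → F) : F :=
  (Matrix.of fun i j : Fin m => z i ^ (μ j + m - 1 - (j : ℕ))).det /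
    ∏ i : Fin m, ∏ j : Fin m, if i < j then z i - z j else 1

/-- Symplectic character sp_λ(z) = det(z_i^{λ_j+n-j+1} - z_i^{-(λ_j+n-j+1)}) /
[∏_i(z_i - z_i⁻¹) ∏_{i<j}(z_i + z_i⁻¹ - z_j - z_j⁻¹)]. -/
def spC {F : Type*} [Field F] (n : ℕ) (lam : Fin n → ℤ) (z : Fin n → F) : F :=
  (Matrix.of fun i j : Fin n =>
      z i ^ (lam j + n - (j : ℕ)) - z i ^ (-(lam j + n - (j : ℕ)))).det /
    ((∏ i : Fin n, (z i - (z i)⁻¹)) * xpairs z)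

/-- Even orthogonal character oe_λ(z) = det(z_i^{λ_j+n-j} + z_i^{-(λ_j+n-j)}) /
[(1+δ_{λ_n,0}) ∏_{i<j}(z_i + z_i⁻¹ - z_j - z_j⁻¹)]. -/
def oeC {F : Type*} [Field F] (n : ℕ) (lam : Fin n → ℤ) (z : Fin n → F) : F :=
  (Matrix.of fun i j : Fin n =>
      z i ^ (lam j + n - 1 - (j : ℕ)) + z i ^ (-(lam j + n - 1 - (j : ℕ)))).det /
    ((if h : 0 < n then (if lam ⟨n - 1, by omega⟩ = 0 then 2 else 1) else 1) * xpairs z)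

/-!
List the points as `x₁, …, xₙ, xₙ⁻¹, …, x₁⁻¹`, which does not change the Schur function since it is
symmetric. The exponents `μⱼ + 2n - 1 - j` then become `c ± aⱼ` with `c = λ₁ + n` and
`aⱼ = λⱼ + n - j`. Pulling `zᵢ ^ c` out of every row (these factors multiply to `1`) leaves the block
matrix `[[A, B], [B, A]]` with `A = (xᵢ ^ aⱼ)` and `B = (xᵢ ^ (-aⱼ))`, whose determinant
`det (A - B) * det (A + B)` is the product of the numerators of `sp_λ` and `oe_{λ+1}`. In the same
ordering the Vandermonde product is `∏ (xᵢ - xᵢ⁻¹)` times the square of `xpairs x`, because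
`(xᵢ - xⱼ)(xᵢ - xⱼ⁻¹)(xⱼ - xᵢ⁻¹)(xⱼ⁻¹ - xᵢ⁻¹) = (xᵢ + xᵢ⁻¹ - xⱼ - xⱼ⁻¹)²`. The factor `1 + δ` of
`oe_{λ+1}` is `1` because `λₙ + 1 > 0`.
-/

open Matrix Finset

def pairProd {M ι : Type*} [CommMonoid M] [Fintype ι] [LinearOrder ι] (f : ι → ι → M) : M :=
  ∏ i, ∏ j, if i < j then f i j else 1

theorem xpairs_eq_pairProd {F : Type*} [Field F] {m : ℕ} (z : Fin m → F) :
    xpairs z = pairProd fun i j => z i + (z i)⁻¹ - z j - (z j)⁻¹ := rfl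

section PairProd

variable {M ι : Type*} [CommMonoid M] [Fintype ι] [LinearOrder ι]

theorem pairProd_mul (f g : ι → ι → M) :
    pairProd f * pairProd g = pairProd fun i j => f i j * g i j := by
  simp only [pairProd, ← prod_mul_distrib]
  refine prod_congr rfl fun i _ => prod_congr rfl fun j _ => ?_
  split_ifs <;> simp

theorem prod_prod_eq_prod_diag_mul_pairProd (f : ι → ι → M) :
    ∏ i, ∏ j, f i j = (∏ i, f i i) * pairProd fun i j => f i j * f j i := by
  have hsplit : ∀ i j, f i j =
      (if i = j then f i j else 1) * ((if i < j then f i j else 1) * (if j < i then f i j else 1)) := by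
    intro i j
    rcases lt_trichotomy i j with h | rfl | h
    · simp [h, h.ne, h.not_gt]
    · simp
    · simp [h, h.ne', h.not_gt]
  calc ∏ i, ∏ j, f i j
      = ∏ i, ∏ j, (if i = j then f i j else 1) *
          ((if i < j then f i j else 1) * (if j < i then f i j else 1)) :=
        prod_congr rfl fun i _ => prod_congr rfl fun j _ => hsplit i j
    _ = (∏ i, f i i) * (pairProd f * ∏ i, ∏ j, if j < i then f i j else 1) := by
        simp only [prod_mul_distrib, prod_ite_eq, mem_univ, if_true, pairProd]
    _ = _ := by rw [prod_comm (s := univ) (t := univ), ← pairProd_mul]; rfl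

end PairProd

section Vandermonde

variable {R : Type*} [CommRing R] {m : ℕ}

theorem pairProd_sub_eq_det_vandermonde (z : Fin m → R) :
    pairProd (fun i j => z i - z j) = (∏ i : Fin m, (-1 : R) ^ #(Ioi i)) * (vandermonde z).det := by
  rw [det_vandermonde, ← prod_mul_distrib, pairProd]
  refine prod_congr rfl fun i _ => ?_
  rw [← prod_filter, ← prod_const, ← prod_mul_distrib]
  exact prod_congr (by ext; simp) fun j _ => by ring

theorem pairProd_sub_comp_perm (σ : Equiv.Perm (Fin m)) (z : Fin m → R) :
    pairProd (fun i j => z (σ i) - z (σ j)) = σ.sign * pairProd fun i j => z i - z j := by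
  have hV : vandermonde (z ∘ σ) = (vandermonde z).submatrix σ id := rfl
  have hσ : pairProd (fun i j => z (σ i) - z (σ j)) = _ := pairProd_sub_eq_det_vandermonde (z ∘ σ)
  rw [hσ, pairProd_sub_eq_det_vandermonde, hV, det_permute]
  ring

end Vandermonde

theorem schur_comp_perm {F : Type*} [Field F] {m : ℕ} (σ : Equiv.Perm (Fin m)) (μ : Fin m → ℤ)
    (z : Fin m → F) : schur m μ (z ∘ σ) = schur m μ z := by
  have hσ : ((σ.sign : ℤ) : F) ≠ 0 := by rcases Int.units_eq_one_or σ.sign with h | h <;> simp [h]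
  change det ((of fun i j => z i ^ (μ j + m - 1 - (j : ℕ))).submatrix σ id) /
      pairProd (fun i j => z (σ i) - z (σ j)) = _
  rw [det_permute, pairProd_sub_comp_perm, schur, mul_div_mul_left _ _ hσ]
  rfl

def finSumFinRevEquiv (n : ℕ) : Fin n ⊕ Fin n ≃ Fin (2 * n) :=
  (Equiv.sumCongr (Equiv.refl _) Fin.revPerm).trans (finSumFinEquiv.trans (finCongr (two_mul n).symm))

section FinSumFinRev

variable {n : ℕ}

@[simp]
theorem finSumFinRevEquiv_inl_val (i : Fin n) : (finSumFinRevEquiv n (.inl i) : ℕ) = i := rfl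

@[simp]
theorem finSumFinRevEquiv_inr_val (i : Fin n) :
    (finSumFinRevEquiv n (.inr i) : ℕ) = 2 * n - 1 - i := by
  simp only [finSumFinRevEquiv, Equiv.trans_apply, Equiv.sumCongr_apply, Sum.map_inr,
    Fin.revPerm_apply, finSumFinEquiv_apply_right, finCongr_apply, Fin.val_cast, Fin.val_natAdd,
    Fin.val_rev]
  omega

theorem finSumFinRevEquiv_inl_lt_inl {i j : Fin n} :
    finSumFinRevEquiv n (.inl i) < finSumFinRevEquiv n (.inl j) ↔ i < j := Iff.rfl

theorem finSumFinRevEquiv_inl_lt_inr (i j : Fin n) :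
    finSumFinRevEquiv n (.inl i) < finSumFinRevEquiv n (.inr j) := by
  rw [Fin.lt_def, finSumFinRevEquiv_inl_val, finSumFinRevEquiv_inr_val]
  omega

theorem finSumFinRevEquiv_inr_lt_inr {i j : Fin n} :
    finSumFinRevEquiv n (.inr i) < finSumFinRevEquiv n (.inr j) ↔ j < i := by
  rw [Fin.lt_def, Fin.lt_def, finSumFinRevEquiv_inr_val, finSumFinRevEquiv_inr_val]
  omega

theorem pairProd_finSumFinRevEquiv {M : Type*} [CommMonoid M] (f : Fin (2 * n) → Fin (2 * n) → M) :
    pairProd f =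
      (pairProd fun i j => f (finSumFinRevEquiv n (.inl i)) (finSumFinRevEquiv n (.inl j))) *
        (∏ i, ∏ j, f (finSumFinRevEquiv n (.inl i)) (finSumFinRevEquiv n (.inr j))) *
        pairProd fun i j => f (finSumFinRevEquiv n (.inr j)) (finSumFinRevEquiv n (.inr i)) := by
  simp only [pairProd, ← (finSumFinRevEquiv n).prod_comp, Fintype.prod_sum_type,
    finSumFinRevEquiv_inl_lt_inl, finSumFinRevEquiv_inr_lt_inr, finSumFinRevEquiv_inl_lt_inr,
    (finSumFinRevEquiv_inl_lt_inr _ _).not_gt, if_true, if_false, prod_const_one, mul_one,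
    prod_mul_distrib]
  rw [prod_comm (s := univ) (t := univ) (f := fun i j => if j < i then _ else 1), mul_assoc]

end FinSumFinRev

theorem det_fromBlocks_self_swap {R : Type*} [CommRing R] {m : Type*} [Fintype m] [DecidableEq m]
    (A B : Matrix m m R) : (fromBlocks A B B A).det = (A - B).det * (A + B).det := by
  have h : fromBlocks A B B A =
      fromBlocks 1 (-1) 0 1 * fromBlocks (A + B) 0 B (A - B) * fromBlocks (1 : Matrix m m R) 1 0 1 := by
    simp only [fromBlocks_multiply]
    congr 1 <;> simp
  rw [h, det_mul, det_mul, det_fromBlocks_zero₂₁, det_fromBlocks_zero₂₁, det_fromBlocks_zero₁₂]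
  simp [mul_comm]

section Factorization

variable {F : Type*} [Field F] {n : ℕ} {x : Fin n → F}

theorem pairProd_sub_sumElim_inv (hx : ∀ i, x i ≠ 0) :
    (pairProd fun i j => (Sum.elim x x⁻¹ ∘ (finSumFinRevEquiv n).symm) i -
        (Sum.elim x x⁻¹ ∘ (finSumFinRevEquiv n).symm) j) =
      (∏ i, (x i - (x i)⁻¹)) * xpairs x ^ 2 := by
  rw [pairProd_finSumFinRevEquiv]
  simp only [Function.comp_apply, Equiv.symm_apply_apply, Sum.elim_inl, Sum.elim_inr, Pi.inv_apply]
  rw [prod_prod_eq_prod_diag_mul_pairProd, sq, mul_left_comm, mul_assoc, mul_assoc,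
    pairProd_mul, pairProd_mul, xpairs_eq_pairProd, pairProd_mul]
  congr 2
  ext i j
  field_simp [hx i, hx j]
  ring

theorem det_sumElim_inv_zpow (hx : ∀ i, x i ≠ 0) (c : ℤ) (a : Fin n → ℤ) (E : Fin (2 * n) → ℤ)
    (hE : ∀ t, E (finSumFinRevEquiv n t) = c + Sum.elim a (-a) t) :
    det (of fun i j => (Sum.elim x x⁻¹ ∘ (finSumFinRevEquiv n).symm) i ^ E j) =
      det (of fun i j => x i ^ a j - x i ^ (-a j)) * det (of fun i j => x i ^ a j + x i ^ (-a j)) := by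
  set A : Matrix (Fin n) (Fin n) F := of fun i j => x i ^ a j
  set B : Matrix (Fin n) (Fin n) F := of fun i j => x i ^ (-a j)
  have hblocks : (of fun i j => (Sum.elim x x⁻¹ ∘ (finSumFinRevEquiv n).symm) i ^ E j).submatrix
      (finSumFinRevEquiv n) (finSumFinRevEquiv n) =
      of fun s t => Sum.elim x x⁻¹ s ^ c * fromBlocks A B B A s t := by
    ext (s | s) (t | t) <;>
      simp [A, B, hE, zpow_add₀, hx, _root_.inv_zpow', _root_.zpow_neg]
  have hc : ∏ s, Sum.elim x x⁻¹ s ^ c = 1 := by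
    simp only [Fintype.prod_sum_type, Sum.elim_inl, Sum.elim_inr, Pi.inv_apply, _root_.inv_zpow,
      prod_inv_distrib]
    exact mul_inv_cancel₀ (prod_ne_zero_iff.2 fun i _ => zpow_ne_zero c (hx i))
  rw [← det_submatrix_equiv_self (finSumFinRevEquiv n), hblocks, det_mul_column, hc, one_mul,
    det_fromBlocks_self_swap]
  rfl

theorem schur_sumElim_inv (hx : ∀ i, x i ≠ 0) (c : ℤ) (a : Fin n → ℤ) (μ : Fin (2 * n) → ℤ)
    (hμ : ∀ t, μ (finSumFinRevEquiv n t) + (2 * n : ℕ) - 1 - (finSumFinRevEquiv n t : ℕ) =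
      c + Sum.elim a (-a) t) :
    schur (2 * n) μ (Sum.elim x x⁻¹ ∘ (finSumFinRevEquiv n).symm) =
      det (of fun i j => x i ^ a j - x i ^ (-a j)) * det (of fun i j => x i ^ a j + x i ^ (-a j)) /
        ((∏ i, (x i - (x i)⁻¹)) * xpairs x ^ 2) := by
  rw [schur, det_sumElim_inv_zpow hx c a _ hμ]
  exact congrArg _ (pairProd_sub_sumElim_inv hx)

end Factorization

theorem X_ne_zero {n : ℕ} (i : Fin n) : X i ≠ 0 :=
  (map_ne_zero_iff _ (IsFractionRing.injective _ _)).2 (MvPolynomial.X_ne_zero i)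

/-- s_{(2λ_1+1,λ_1+λ_2+1,…,λ_1+λ_n+1,λ_1-λ_n,…,λ_1-λ_1)}(x,x⁻¹)
  = sp_λ(x) · oe_{(λ_1+1,…,λ_n+1)}(x). -/
theorem schur_factorization_sp_oe {n : ℕ} (hn : 0 < n)
    (lam : Fin n → ℕ) :
    schur (2 * n)
        (fun j => if h : (j : ℕ) < n then (lam ⟨0, hn⟩ : ℤ) + lam ⟨j, h⟩ + 1
                  else (lam ⟨0, hn⟩ : ℤ) - lam ⟨2 * n - 1 - (j : ℕ), by have := j.isLt; omega⟩)
        (fun i => if h : (i : ℕ) < n then X ⟨i, h⟩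
                  else (X ⟨(i : ℕ) - n, by have := i.isLt; omega⟩)⁻¹)
      = spC n (fun j => (lam j : ℤ)) X * oeC n (fun j => (lam j : ℤ) + 1) X := by
  set σ : Equiv.Perm (Fin (2 * n)) :=
    (finSumFinRevEquiv n).symm.trans (finSumFinEquiv.trans (finCongr (two_mul n).symm))
  have hz : (fun i : Fin (2 * n) => if h : (i : ℕ) < n then X ⟨i, h⟩
      else (X ⟨(i : ℕ) - n, by have := i.isLt; omega⟩)⁻¹) ∘ σ =
      Sum.elim X X⁻¹ ∘ (finSumFinRevEquiv n).symm := by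
    ext k
    obtain ⟨s | s, rfl⟩ := (finSumFinRevEquiv n).surjective k <;> simp [σ]
  rw [← schur_comp_perm σ, hz, schur_sumElim_inv X_ne_zero (lam ⟨0, hn⟩ + n) (fun j => lam j + n - j)]
  · have hoe : ¬((lam ⟨n - 1, by omega⟩ : ℤ) + 1 = 0) := by omega
    have hexp : ∀ j : Fin n, (lam j : ℤ) + 1 + n - 1 - j = lam j + n - j := fun j => by ring
    simp only [spC, oeC, dif_pos hn, if_neg hoe, one_mul, hexp, sq]
    rw [div_mul_div_comm, mul_assoc]
  · rintro (j | j)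
    · have hj := j.isLt
      simp only [finSumFinRevEquiv_inl_val, hj, ↓reduceDIte, Fin.eta, Nat.cast_mul, Nat.cast_ofNat,
        Sum.elim_inl]
      ring
    · have hj := j.isLt
      have hrev : (⟨2 * n - 1 - (2 * n - 1 - j), by omega⟩ : Fin n) = j := Fin.ext (by rw [Fin.val_mk]; omega)
      simp only [finSumFinRevEquiv_inr_val, show ¬(2 * n - 1 - (j : ℕ) < n) by omega, ↓reduceDIte,
        hrev, Nat.cast_mul, Nat.cast_ofNat, Sum.elim_inr, Pi.neg_apply, neg_sub]
      omega
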